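/- For the noncommutative torus algebra A with λ/2π irrational, the module T^α_{p,q} := A/(e^{−iα} a_{p,q} − 1)A with p, q coprime satisfies: adding λ to α gives an isomorphic right A-module, i.e. T^{α+λ}_{p,q} ≅ T^α_{p,q}. -/

import Mathlib

open MulOpposite

/-- For the noncommutative torus algebra `A` (generated over `ℂ` by elements
`a_{n,l}`, `(n,l) ∈ ℤ²`, with `a_{n₁,l₁} a_{n₂,l₂} = e^{iλ n₁ l₂} a_{n₁+n₂,l₁+l₂}` and
`a_{0,0} = 1`) with `λ/2π` irrational, and `p, q` coprime, the right `A`-module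
`T^α_{p,q} = A/(e^{−iα} a_{p,q} − 1)A` satisfies `T^{α+λ}_{p,q} ≅ T^α_{p,q}`. -/
theorem nc_torus_module_shift_iso (lam : ℝ) (hirr : Irrational (lam / (2 * Real.pi)))
    {A : Type*} [Ring A] [Algebra ℂ A] (a : ℤ → ℤ → A)
    (hmul : ∀ n₁ l₁ n₂ l₂ : ℤ, a n₁ l₁ * a n₂ l₂ =
      Complex.exp (Complex.I * lam * n₁ * l₂) • a (n₁ + n₂) (l₁ + l₂))
    (hone : a 0 0 = 1)
    (hspan : Submodule.span ℂ (Set.range fun m : ℤ × ℤ => a m.1 m.2) = ⊤)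
    (p q : ℤ) (hpq : IsCoprime p q) (α : ℝ) :
    Nonempty
      ((A ⧸ Submodule.span Aᵐᵒᵖ {Complex.exp (-(Complex.I * (α + lam))) • a p q - 1}) ≃ₗ[Aᵐᵒᵖ]
        (A ⧸ Submodule.span Aᵐᵒᵖ {Complex.exp (-(Complex.I * α)) • a p q - 1})) := by
  obtain ⟨n, l, hnl⟩ : ∃ n l : ℤ, n * q = p * l + 1 := by
    obtain ⟨s, t, hst⟩ := hpq
    exact ⟨t, -s, by linarith⟩
  set u : A := a n l with hu
  set v : A := Complex.exp (Complex.I * lam * n * l) • a (-n) (-l) with hv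
  have huv : u * v = 1 := by
    rw [hu, hv, mul_smul_comm, hmul, smul_smul, ← Complex.exp_add]
    rw [show n + -n = 0 by ring, show l + -l = 0 by ring, hone]
    rw [show Complex.I * lam * n * l + Complex.I * lam * n * (-l : ℤ) = 0 by push_cast; ring]
    simp
  have hvu : v * u = 1 := by
    rw [hu, hv, smul_mul_assoc, hmul, smul_smul, ← Complex.exp_add]
    rw [show -n + n = 0 by ring, show -l + l = 0 by ring, hone]
    rw [show Complex.I * lam * n * l + Complex.I * lam * (-n : ℤ) * l = 0 by push_cast; ring]
    simp
  -- the linear equivalence: left multiplication by u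
  have fsmul : ∀ (c : A) (r : Aᵐᵒᵖ) (x : A), c * (r • x) = r • (c * x) := by
    intro c r x
    simp [MulOpposite.smul_eq_mul_unop, mul_assoc]
  let f : A →ₗ[Aᵐᵒᵖ] A := ⟨⟨fun x => u * x, fun x y => mul_add u x y⟩, fun r x => fsmul u r x⟩
  let g : A →ₗ[Aᵐᵒᵖ] A := ⟨⟨fun x => v * x, fun x y => mul_add v x y⟩, fun r x => fsmul v r x⟩
  let e : A ≃ₗ[Aᵐᵒᵖ] A := LinearEquiv.ofLinear f g
    (by ext x; simp only [LinearMap.coe_comp, Function.comp_apply, LinearMap.coe_mk,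
          AddHom.coe_mk, LinearMap.id_apply, f, g, ← mul_assoc, huv, one_mul])
    (by ext x; simp only [LinearMap.coe_comp, Function.comp_apply, LinearMap.coe_mk,
          AddHom.coe_mk, LinearMap.id_apply, f, g, ← mul_assoc, hvu, one_mul])
  set x : A := Complex.exp (-(Complex.I * (α + lam))) • a p q - 1 with hx
  set y : A := Complex.exp (-(Complex.I * α)) • a p q - 1 with hy
  have hcast : (n : ℂ) * q = (p : ℂ) * l + 1 := by exact_mod_cast hnl
  have key : u * x = y * u := by
    rw [hx, hy, mul_sub, sub_mul, mul_one, one_mul, mul_smul_comm, smul_mul_assoc,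
      hmul, hmul, smul_smul, smul_smul, ← Complex.exp_add, ← Complex.exp_add,
      show n + p = p + n from add_comm n p, show l + q = q + l from add_comm l q]
    congr 2
    rw [Complex.exp_eq_exp_iff_exists_int]
    refine ⟨0, ?_⟩
    push_cast
    linear_combination Complex.I * (lam : ℂ) * hcast
  have hunit : IsUnit (op u : Aᵐᵒᵖ) := ⟨⟨op u, op v, by rw [← op_mul, hvu, op_one],
    by rw [← op_mul, huv, op_one]⟩, rfl⟩
  have hmap : (Submodule.span Aᵐᵒᵖ {x}).map (e : A →ₗ[Aᵐᵒᵖ] A) = Submodule.span Aᵐᵒᵖ {y} := by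
    rw [Submodule.map_span, Set.image_singleton]
    have : e x = op u • y := by
      show u * x = y * u
      exact key
    rw [LinearEquiv.coe_coe, this, Submodule.span_singleton_smul_eq hunit]
  exact ⟨Submodule.Quotient.equiv _ _ e hmap⟩
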